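/- Let p > 1, λ ≤ p − 1, 1/p < β < 1, and define u(t) = max(v(t), 0) where v(t) = ∫_t^1 ds / (s · log(e/s) · (1 + log^β(log(e/s)))) for 0 < t ≤ 1 and v(t) = 0 for t > 1. Then ∫_0^1 t^{p-1} log^λ(4/t) |u(t)|^p dt < ∞ and ∫_0^1 t^{p-1} log^λ(4/t) |u'(t)|^p dt < ∞, yet u(t) → ∞ as t → 0+. -/

import Mathlib

open MeasureTheory Real Set Filter
open scoped Topology

namespace Stmt7

noncomputable def f (b s : ℝ) : ℝ :=
  (s * Real.log (Real.exp 1 / s) * (1 + Real.log (Real.log (Real.exp 1 / s)) ^ b))⁻¹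

lemma L_eq {s : ℝ} (hs : 0 < s) : Real.log (Real.exp 1 / s) = 1 - Real.log s := by
  rw [Real.log_div (Real.exp_ne_zero 1) hs.ne', Real.log_exp]

lemma one_le_L {s : ℝ} (h0 : 0 < s) (h1 : s ≤ 1) : 1 ≤ Real.log (Real.exp 1 / s) := by
  rw [L_eq h0]
  have := Real.log_nonpos h0.le h1
  linarith

lemma w_nonneg {s : ℝ} (h0 : 0 < s) (h1 : s ≤ 1) : 0 ≤ Real.log (Real.log (Real.exp 1 / s)) :=
  Real.log_nonneg (one_le_L h0 h1)

lemma D_pos {b s : ℝ} (h0 : 0 < s) (h1 : s ≤ 1) :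
    0 < 1 + Real.log (Real.log (Real.exp 1 / s)) ^ b := by
  have := Real.rpow_nonneg (w_nonneg h0 h1) b
  linarith

lemma denom_pos {b s : ℝ} (h0 : 0 < s) (h1 : s ≤ 1) :
    0 < s * Real.log (Real.exp 1 / s) * (1 + Real.log (Real.log (Real.exp 1 / s)) ^ b) :=
  mul_pos (mul_pos h0 (zero_lt_one.trans_le (one_le_L h0 h1))) (D_pos h0 h1)

lemma f_pos {b s : ℝ} (h0 : 0 < s) (h1 : s ≤ 1) : 0 < f b s :=
  inv_pos.mpr (denom_pos h0 h1)

lemma f_contAt {b : ℝ} (hb : 0 < b) {t : ℝ} (h0 : 0 < t) (h1 : t ≤ 1) :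
    ContinuousAt (f b) t := by
  have hL0 : (0:ℝ) < Real.log (Real.exp 1 / t) := zero_lt_one.trans_le (one_le_L h0 h1)
  have hE : ContinuousAt (fun s : ℝ => Real.exp 1 / s) t :=
    continuousAt_const.div continuousAt_id h0.ne'
  have hL : ContinuousAt (fun s : ℝ => Real.log (Real.exp 1 / s)) t :=
    hE.log (div_pos (Real.exp_pos 1) h0).ne'
  have hw : ContinuousAt (fun s : ℝ => Real.log (Real.log (Real.exp 1 / s))) t :=
    hL.log hL0.ne'
  have hwb : ContinuousAt (fun s : ℝ => Real.log (Real.log (Real.exp 1 / s)) ^ b) t :=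
    hw.rpow_const (Or.inr hb.le)
  exact ((continuousAt_id.mul hL).mul (continuousAt_const.add hwb)).inv₀ (denom_pos h0 h1).ne'

lemma f_intble {b : ℝ} (hb : 0 < b) {t : ℝ} (h0 : 0 < t) (h1 : t ≤ 1) :
    IntervalIntegrable (f b) volume t 1 := by
  apply ContinuousOn.intervalIntegrable
  intro x hx
  rw [uIcc_of_le h1] at hx
  exact (f_contAt hb (h0.trans_le hx.1) hx.2).continuousWithinAt

lemma v_le_neg_log {b : ℝ} (hb : 0 < b) {t : ℝ} (h0 : 0 < t) (h1 : t ≤ 1) :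
    (∫ s in t..1, f b s) ≤ -Real.log t := by
  have hne : (0:ℝ) ∉ uIcc t 1 := by
    rw [uIcc_of_le h1]
    exact fun h => absurd h.1 (not_le.mpr h0)
  have h2 : (∫ s in t..1, s⁻¹) = -Real.log t := by
    rw [integral_inv hne, one_div, Real.log_inv]
  rw [← h2]
  apply intervalIntegral.integral_mono_on h1 (f_intble hb h0 h1)
  · apply ContinuousOn.intervalIntegrable
    intro x hx
    rw [uIcc_of_le h1] at hx
    exact (continuousAt_inv₀ (h0.trans_le hx.1).ne').continuousWithinAt
  · intro x hx
    have hx0 : 0 < x := h0.trans_le hx.1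
    have hL : 1 ≤ Real.log (Real.exp 1 / x) := one_le_L hx0 hx.2
    have hD : 0 ≤ Real.log (Real.log (Real.exp 1 / x)) ^ b :=
      Real.rpow_nonneg (w_nonneg hx0 hx.2) b
    have hxle : x ≤ x * Real.log (Real.exp 1 / x) * (1 + Real.log (Real.log (Real.exp 1 / x)) ^ b) := by
      nlinarith [mul_nonneg (mul_nonneg hx0.le (zero_le_one.trans hL)) hD,
        mul_le_mul_of_nonneg_left hL hx0.le]
    exact inv_anti₀ hx0 hxle

section test

variable {b t : ℝ}

lemma add_rpow_le {w b : ℝ} (hw : 0 ≤ w) (hb0 : 0 ≤ b) (hb1 : b ≤ 1) :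
    (1 + w) ^ b ≤ 1 + w ^ b := by
  have h := NNReal.rpow_add_le_add_rpow 1 w.toNNReal hb0 hb1
  rw [← NNReal.coe_le_coe] at h
  simpa [NNReal.coe_rpow, Real.coe_toNNReal w hw] using h

lemma m_tendsto : Tendsto (fun x : ℝ => 1 + Real.log (1 - Real.log x)) (𝓝[>] (0:ℝ)) atTop := by
  have h1 : Tendsto (fun x : ℝ => 1 - Real.log x) (𝓝[>] (0:ℝ)) atTop := by
    have h0 := tendsto_neg_atBot_atTop.comp Real.tendsto_log_nhdsGT_zero
    have := tendsto_atTop_add_const_left _ 1 h0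
    simpa [Function.comp_def, sub_eq_add_neg] using this
  have h2 := Real.tendsto_log_atTop.comp h1
  have := tendsto_atTop_add_const_left _ 1 h2
  simpa [Function.comp_def] using this

-- derivative of x ↦ log (exp 1 / x)
lemma hasDerivAt_L {s : ℝ} (hs : 0 < s) :
    HasDerivAt (fun x : ℝ => Real.log (Real.exp 1 / x)) (-s⁻¹) s := by
  have h1 : HasDerivAt (fun x : ℝ => 1 - Real.log x) (-s⁻¹) s := by
    simpa using (Real.hasDerivAt_log hs.ne').const_sub 1
  apply h1.congr_of_eventuallyEq
  filter_upwards [Ioi_mem_nhds hs] with x hx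
  rw [Real.log_div (Real.exp_ne_zero 1) (ne_of_gt hx), Real.log_exp]


-- FTC helper: derivative pieces at a point s with 0 < s, s ≤ 1
lemma hasDerivAt_m {s : ℝ} (h0 : 0 < s) (h1 : s ≤ 1) :
    HasDerivAt (fun x : ℝ => 1 + Real.log (Real.log (Real.exp 1 / x)))
      (-s⁻¹ / Real.log (Real.exp 1 / s)) s := by
  have hL0 : (0:ℝ) < Real.log (Real.exp 1 / s) := by
    rw [Real.log_div (Real.exp_ne_zero 1) h0.ne', Real.log_exp]
    have := Real.log_nonpos h0.le h1
    linarith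
  exact ((hasDerivAt_L h0).log hL0.ne').const_add 1

lemma le_v {b : ℝ} (hb0 : 0 < b) (hb1 : b ≤ 1) {t : ℝ} (h0 : 0 < t) (h1 : t ≤ 1) :
    (1/2) * Real.log (1 + Real.log (Real.log (Real.exp 1 / t))) ≤ ∫ s in t..1, f b s := by
  set g : ℝ → ℝ := fun s =>
    (2 * (s * Real.log (Real.exp 1 / s) * (1 + Real.log (Real.log (Real.exp 1 / s)))))⁻¹ with hg
  set H : ℝ → ℝ := fun s => -(1/2) * Real.log (1 + Real.log (Real.log (Real.exp 1 / s))) with hH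
  have hmem : ∀ x ∈ Icc t 1, 0 < x ∧ x ≤ 1 := fun x hx => ⟨h0.trans_le hx.1, hx.2⟩
  have hL1 : ∀ x ∈ Icc t 1, 1 ≤ Real.log (Real.exp 1 / x) := by
    intro x hx
    obtain ⟨hx0, hx1⟩ := hmem x hx
    rw [Real.log_div (Real.exp_ne_zero 1) hx0.ne', Real.log_exp]
    have := Real.log_nonpos hx0.le hx1
    linarith
  have hw0 : ∀ x ∈ Icc t 1, 0 ≤ Real.log (Real.log (Real.exp 1 / x)) :=
    fun x hx => Real.log_nonneg (hL1 x hx)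
  have hHd : ∀ x ∈ Icc t 1, HasDerivAt H (g x) x := by
    intro x hx
    obtain ⟨hx0, hx1⟩ := hmem x hx
    have hL0 : (0:ℝ) < Real.log (Real.exp 1 / x) := zero_lt_one.trans_le (hL1 x hx)
    have hm0 : (0:ℝ) < 1 + Real.log (Real.log (Real.exp 1 / x)) := by
      have := hw0 x hx; linarith
    have h := ((hasDerivAt_m hx0 hx1).log hm0.ne').const_mul (-(1/2) : ℝ)
    refine h.congr_deriv ?_
    symm
    rw [hg]
    field_simp
  have hgint : IntervalIntegrable g volume t 1 := by
    apply ContinuousOn.intervalIntegrable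
    intro x hx
    rw [uIcc_of_le h1] at hx
    obtain ⟨hx0, hx1⟩ := hmem x hx
    have hL0 : (0:ℝ) < Real.log (Real.exp 1 / x) := zero_lt_one.trans_le (hL1 x hx)
    have hm0 : (0:ℝ) < 1 + Real.log (Real.log (Real.exp 1 / x)) := by
      have := hw0 x hx; linarith
    have hE : ContinuousAt (fun s : ℝ => Real.exp 1 / s) x :=
      continuousAt_const.div continuousAt_id hx0.ne'
    have hLc : ContinuousAt (fun s : ℝ => Real.log (Real.exp 1 / s)) x :=
      hE.log (div_pos (Real.exp_pos 1) hx0).ne'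
    have hwc : ContinuousAt (fun s : ℝ => Real.log (Real.log (Real.exp 1 / s))) x :=
      hLc.log hL0.ne'
    have : ContinuousAt g x := by
      apply ContinuousAt.inv₀
      · exact continuousAt_const.mul ((continuousAt_id.mul hLc).mul (continuousAt_const.add hwc))
      · positivity
    exact this.continuousWithinAt
  have hFTC : (∫ s in t..1, g s) = H 1 - H t := by
    apply intervalIntegral.integral_eq_sub_of_hasDerivAt
    · intro x hx
      rw [uIcc_of_le h1] at hx
      exact hHd x hx
    · exact hgint
  have hH1 : H 1 = 0 := by
    simp [hH, Real.log_exp]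
  have hmono : (∫ s in t..1, g s) ≤ ∫ s in t..1, f b s := by
    apply intervalIntegral.integral_mono_on h1 hgint (f_intble hb0 h0 h1)
    intro x hx
    obtain ⟨hx0, hx1⟩ := hmem x hx
    have hL0 : (0:ℝ) < Real.log (Real.exp 1 / x) := zero_lt_one.trans_le (hL1 x hx)
    have hw0' := hw0 x hx
    set w := Real.log (Real.log (Real.exp 1 / x))
    have hwb : w ^ b ≤ 1 + w := by
      rcases le_total w 1 with hw1 | hw1
      · have := Real.rpow_le_one hw0' hw1 hb0.le
        linarith
      · have h2 := Real.rpow_le_rpow_of_exponent_le hw1 hb1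
        rw [Real.rpow_one] at h2
        linarith
    rw [hg]
    show _ ≤ f b x
    rw [f]
    apply inv_anti₀
    · have hD : (0:ℝ) < 1 + w ^ b := by
        have := Real.rpow_nonneg hw0' b; linarith
      positivity
    · have hP : (0:ℝ) < x * Real.log (Real.exp 1 / x) := mul_pos hx0 hL0
      nlinarith [mul_le_mul_of_nonneg_left hwb hP.le]
  calc (1/2) * Real.log (1 + Real.log (Real.log (Real.exp 1 / t)))
      = H 1 - H t := by rw [hH1, hH]; ring
    _ = ∫ s in t..1, g s := hFTC.symm
    _ ≤ _ := hmono


noncomputable def F (b p t : ℝ) : ℝ :=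
  if t ≤ 0 then 0 else (b * p - 1)⁻¹ * (1 + Real.log (1 - Real.log t)) ^ (1 - b * p)

noncomputable def G (b p t : ℝ) : ℝ :=
  (t * ((1 - Real.log t) * (1 + Real.log (1 - Real.log t)) ^ (b * p)))⁻¹

lemma F_hasDeriv {b p t : ℝ} (hbp : 1 < b * p) (h0 : 0 < t) (h1 : t ≤ 1) :
    HasDerivAt (F b p) (G b p t) t := by
  have hlog : Real.log t ≤ 0 := Real.log_nonpos h0.le h1
  have hh0 : (0:ℝ) < 1 - Real.log t := by linarith
  have hw0 : (0:ℝ) ≤ Real.log (1 - Real.log t) := Real.log_nonneg (by linarith)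
  have hm0 : (0:ℝ) < 1 + Real.log (1 - Real.log t) := by linarith
  have hh : HasDerivAt (fun x : ℝ => 1 - Real.log x) (-t⁻¹) t := by
    simpa using (Real.hasDerivAt_log h0.ne').const_sub 1
  have hm : HasDerivAt (fun x : ℝ => 1 + Real.log (1 - Real.log x))
      (-t⁻¹ / (1 - Real.log t)) t := (hh.log hh0.ne').const_add 1
  have hr := (hm.rpow_const (p := 1 - b * p) (Or.inl hm0.ne')).const_mul ((b * p - 1)⁻¹ : ℝ)
  have heq : F b p =ᶠ[𝓝 t] fun x : ℝ =>
      (b * p - 1)⁻¹ * (1 + Real.log (1 - Real.log x)) ^ (1 - b * p) := by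
    filter_upwards [Ioi_mem_nhds h0] with x hx
    rw [F, if_neg (not_le.mpr hx)]
  have hgoal := hr.congr_of_eventuallyEq heq
  refine hgoal.congr_deriv ?_
  symm
  rw [G]
  have hexp : (1 - b * p - 1 : ℝ) = -(b * p) := by ring
  rw [hexp, Real.rpow_neg hm0.le]
  have hmbp : (0:ℝ) < (1 + Real.log (1 - Real.log t)) ^ (b * p) :=
    Real.rpow_pos_of_pos hm0 _
  have hc : (b * p - 1)⁻¹ * (1 - b * p) = -1 := by
    rw [show (1 - b * p : ℝ) = -(b * p - 1) by ring, mul_neg,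
      inv_mul_cancel₀ (by linarith : b * p - 1 ≠ 0)]
  rw [mul_inv, mul_inv, div_eq_mul_inv]
  linear_combination (t⁻¹ * (1 - Real.log t)⁻¹ *
    ((1 + Real.log (1 - Real.log t)) ^ (b * p))⁻¹) * hc

lemma F_contOn {b p : ℝ} (hbp : 1 < b * p) : ContinuousOn (F b p) (Icc 0 1) := by
  intro x hx
  rcases eq_or_lt_of_le hx.1 with he | hpos
  · have hF0 : F b p 0 = 0 := if_pos le_rfl
    have key : Tendsto (F b p) (nhdsWithin 0 (Ici (0:ℝ))) (𝓝 0) := by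
      rw [← Set.Ioi_union_left, nhdsWithin_union, tendsto_sup]
      constructor
      · have hm : Tendsto (fun x : ℝ => 1 + Real.log (1 - Real.log x)) (𝓝[>] (0:ℝ)) atTop :=
          m_tendsto
        have h2 : Tendsto (fun y : ℝ => (b * p - 1)⁻¹ * y ^ (-(b * p - 1))) atTop (𝓝 0) := by
          have h3 := (tendsto_rpow_neg_atTop (by linarith : (0:ℝ) < b * p - 1)).const_mul
            ((b * p - 1)⁻¹ : ℝ)
          simpa using h3
        have h4 := h2.comp hm
        apply h4.congr'
        filter_upwards [self_mem_nhdsWithin] with x hx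
        have : ¬ x ≤ 0 := not_le.mpr hx
        rw [Function.comp_apply, F, if_neg this]
        norm_num
      · rw [nhdsWithin_singleton]
        have := tendsto_pure_nhds (F b p) 0
        rwa [hF0] at this
    rw [← he]
    have : ContinuousWithinAt (F b p) (Ici 0) 0 := by
      unfold ContinuousWithinAt
      rw [hF0]
      exact key
    exact this.mono Icc_subset_Ici_self
  · exact (F_hasDeriv hbp hpos hx.2).continuousAt.continuousWithinAt

lemma G_nonneg {b p t : ℝ} (h0 : 0 < t) (h1 : t ≤ 1) : 0 ≤ G b p t := by
  have hlog : Real.log t ≤ 0 := Real.log_nonpos h0.le h1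
  have hh0 : (0:ℝ) < 1 - Real.log t := by linarith
  have hm0 : (0:ℝ) < 1 + Real.log (1 - Real.log t) := by
    have := Real.log_nonneg (by linarith : (1:ℝ) ≤ 1 - Real.log t); linarith
  have := Real.rpow_pos_of_pos hm0 (b * p)
  rw [G]
  positivity

lemma G_integrable {b p : ℝ} (hbp : 1 < b * p) : IntegrableOn (G b p) (Ioc (0:ℝ) 1) := by
  apply intervalIntegral.integrableOn_deriv_of_nonneg (F_contOn hbp)
  · exact fun x hx => F_hasDeriv hbp hx.1 hx.2.le
  · exact fun x hx => G_nonneg hx.1 hx.2.le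


lemma A_bounds {t : ℝ} (h0 : 0 < t) (h1 : t ≤ 1) :
    1 ≤ Real.log (4/t) ∧ Real.log (4/t) ≤ 2 * (1 - Real.log t) := by
  have hlt : Real.log t ≤ 0 := Real.log_nonpos h0.le h1
  have hsplit : Real.log (4/t) = Real.log 4 - Real.log t :=
    Real.log_div (by norm_num) h0.ne'
  have h14 : 1 ≤ Real.log 4 := by
    rw [Real.le_log_iff_exp_le (by norm_num : (0:ℝ) < 4)]
    have := Real.exp_one_lt_d9
    linarith
  have h42 : Real.log 4 ≤ 2 := by
    rw [Real.log_le_iff_le_exp (by norm_num : (0:ℝ) < 4)]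
    have h := Real.exp_one_gt_d9
    have : Real.exp 2 = Real.exp 1 * Real.exp 1 := by
      rw [← Real.exp_add]; norm_num
    nlinarith
  constructor <;> [linarith [hsplit]; skip]
  rw [hsplit]; linarith

lemma A_rpow_le {p l t : ℝ} (hp : 1 < p) (hl : l ≤ p - 1) (h0 : 0 < t) (h1 : t ≤ 1) :
    Real.log (4/t) ^ l ≤ 2 ^ (p-1) * (1 - Real.log t) ^ (p-1) := by
  obtain ⟨hA1, hA2⟩ := A_bounds h0 h1
  have hlt : Real.log t ≤ 0 := Real.log_nonpos h0.le h1
  calc Real.log (4/t) ^ l ≤ Real.log (4/t) ^ (p-1) :=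
        Real.rpow_le_rpow_of_exponent_le hA1 hl
    _ ≤ (2 * (1 - Real.log t)) ^ (p-1) :=
        Real.rpow_le_rpow (by linarith) hA2 (by linarith)
    _ = 2 ^ (p-1) * (1 - Real.log t) ^ (p-1) :=
        Real.mul_rpow (by norm_num) (by linarith)

lemma bound1 {p l t U : ℝ} (hp : 1 < p) (hl : l ≤ p - 1) (h0 : 0 < t) (h1 : t ≤ 1)
    (hU0 : 0 ≤ U) (hU : U ≤ 1 - Real.log t) :
    t ^ (p-1) * Real.log (4/t) ^ l * U ^ p ≤
      2 ^ (p-1) * (1 + ((p-1) / (2*(2*p-1)))⁻¹) ^ (2*p-1) := by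
  set ε : ℝ := (p-1) / (2*(2*p-1)) with hεdef
  have hε : 0 < ε := by
    apply div_pos <;> nlinarith
  set h := 1 - Real.log t with hhdef
  have hlt : Real.log t ≤ 0 := Real.log_nonpos h0.le h1
  have hh1 : 1 ≤ h := by rw [hhdef]; linarith
  have hA0 : 0 ≤ Real.log (4/t) ^ l := Real.rpow_nonneg (by
    have := (A_bounds h0 h1).1; linarith) l
  have step1 : t ^ (p-1) * Real.log (4/t) ^ l * U ^ p ≤
      t ^ (p-1) * (2 ^ (p-1) * h ^ (p-1)) * h ^ p := by
    have hUp : U ^ p ≤ h ^ p := Real.rpow_le_rpow hU0 hU (by linarith)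
    have hAl := A_rpow_le hp hl h0 h1
    apply mul_le_mul _ hUp (Real.rpow_nonneg hU0 p) (by positivity)
    exact mul_le_mul le_rfl hAl hA0 (Real.rpow_nonneg h0.le _)
  have hsplit : h ^ (p-1) * h ^ p = h ^ (2*p-1) := by
    rw [← Real.rpow_add (by linarith : (0:ℝ) < h), show p-1+p = 2*p-1 by ring]
  have hti : 1 ≤ t⁻¹ := by simpa using inv_anti₀ h0 h1
  have hX1 : 1 ≤ (t⁻¹) ^ ε := Real.one_le_rpow hti hε.le
  have hKb : h ≤ (1 + ε⁻¹) * (t⁻¹) ^ ε := by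
    have hlog2 : Real.log t⁻¹ ≤ (t⁻¹) ^ ε / ε := Real.log_le_rpow_div (by positivity) hε
    have hli : Real.log t⁻¹ = -Real.log t := Real.log_inv t
    have hdiv : (t⁻¹) ^ ε / ε = ε⁻¹ * (t⁻¹) ^ ε := by
      rw [div_eq_mul_inv, mul_comm]
    have hεinv : 0 < ε⁻¹ := by positivity
    rw [hhdef]
    nlinarith
  have hh2 : h ^ (2*p-1) ≤ (1 + ε⁻¹) ^ (2*p-1) * (t⁻¹) ^ (ε*(2*p-1)) := by
    have hK0 : (0:ℝ) ≤ 1 + ε⁻¹ := by positivity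
    calc h ^ (2*p-1) ≤ ((1 + ε⁻¹) * (t⁻¹) ^ ε) ^ (2*p-1) :=
          Real.rpow_le_rpow (by linarith) hKb (by linarith)
      _ = (1 + ε⁻¹) ^ (2*p-1) * ((t⁻¹) ^ ε) ^ (2*p-1) :=
          Real.mul_rpow hK0 (Real.rpow_nonneg (by positivity) _)
      _ = (1 + ε⁻¹) ^ (2*p-1) * (t⁻¹) ^ (ε*(2*p-1)) := by
          rw [← Real.rpow_mul (by positivity : (0:ℝ) ≤ t⁻¹)]
  have htb : t ^ (p-1) * (t⁻¹) ^ (ε*(2*p-1)) ≤ 1 := by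
    have hE : ε * (2*p-1) = (p-1)/2 := by
      have h2p : (2*p-1) ≠ 0 := by nlinarith
      rw [hεdef, div_mul_eq_mul_div, mul_div_mul_right _ _ h2p]
    rw [hE, Real.inv_rpow h0.le, ← Real.rpow_neg h0.le,
      ← Real.rpow_add h0]
    apply Real.rpow_le_one h0.le h1
    linarith
  have hK0 : (0:ℝ) ≤ 1 + ε⁻¹ := by positivity
  have h2p0 : (0:ℝ) ≤ 2 ^ (p-1) := Real.rpow_nonneg (by norm_num) _
  calc t ^ (p-1) * Real.log (4/t) ^ l * U ^ p
      ≤ t ^ (p-1) * (2 ^ (p-1) * h ^ (p-1)) * h ^ p := step1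
    _ = 2 ^ (p-1) * (t ^ (p-1) * (h ^ (p-1) * h ^ p)) := by ring
    _ = 2 ^ (p-1) * (t ^ (p-1) * h ^ (2*p-1)) := by rw [hsplit]
    _ ≤ 2 ^ (p-1) * (t ^ (p-1) * ((1 + ε⁻¹) ^ (2*p-1) * (t⁻¹) ^ (ε*(2*p-1)))) := by
        apply mul_le_mul_of_nonneg_left _ h2p0
        exact mul_le_mul_of_nonneg_left hh2 (Real.rpow_nonneg h0.le _)
    _ = (2 ^ (p-1) * (1 + ε⁻¹) ^ (2*p-1)) * (t ^ (p-1) * (t⁻¹) ^ (ε*(2*p-1))) := by ring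
    _ ≤ (2 ^ (p-1) * (1 + ε⁻¹) ^ (2*p-1)) * 1 := by
        apply mul_le_mul_of_nonneg_left htb
        exact mul_nonneg h2p0 (Real.rpow_nonneg hK0 _)
    _ = 2 ^ (p-1) * (1 + ε⁻¹) ^ (2*p-1) := by rw [mul_one]


lemma bound2 {p l b t : ℝ} (hp : 1 < p) (hl : l ≤ p - 1) (hb0 : 0 < b) (hb1 : b ≤ 1)
    (h0 : 0 < t) (h1 : t ≤ 1) :
    t ^ (p-1) * Real.log (4/t) ^ l * (f b t) ^ p ≤ 2 ^ (p-1) * G b p t := by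
  have hlt : Real.log t ≤ 0 := Real.log_nonpos h0.le h1
  have hh1 : (1:ℝ) ≤ 1 - Real.log t := by linarith
  have hh0 : (0:ℝ) < 1 - Real.log t := by linarith
  set h := 1 - Real.log t with hhdef
  have hw0 : 0 ≤ Real.log h := Real.log_nonneg hh1
  set w := Real.log h with hwdef
  have hm1 : (1:ℝ) ≤ 1 + w := by linarith
  have hD1 : (1:ℝ) ≤ 1 + w ^ b := by
    have := Real.rpow_nonneg hw0 b; linarith
  have hfe : f b t = (t * h * (1 + w ^ b))⁻¹ := by
    rw [f, L_eq h0]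
  have hMpos : (0:ℝ) < (1 + w) ^ (b*p) := Real.rpow_pos_of_pos (by linarith) _
  have hfp : (f b t) ^ p = (t ^ p * h ^ p * (1 + w ^ b) ^ p)⁻¹ := by
    rw [hfe, ← Real.mul_rpow (by positivity) (by linarith),
      ← Real.mul_rpow (by positivity) (by linarith),
      ← Real.inv_rpow (by positivity)]
  have hmD : (1 + w) ^ (b*p) ≤ (1 + w ^ b) ^ p := by
    have hmb : (1 + w) ^ b ≤ 1 + w ^ b := add_rpow_le hw0 hb0.le hb1
    calc (1 + w) ^ (b*p) = ((1 + w) ^ b) ^ p := Real.rpow_mul (by linarith) b p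
      _ ≤ (1 + w ^ b) ^ p :=
          Real.rpow_le_rpow (Real.rpow_nonneg (by linarith) b) hmb (by linarith)
  have hinv : (f b t) ^ p ≤ (t ^ p * h ^ p * (1 + w) ^ (b*p))⁻¹ := by
    rw [hfp]
    apply inv_anti₀
    · positivity
    · apply mul_le_mul_of_nonneg_left hmD
      positivity
  have hA0 : 0 ≤ Real.log (4/t) ^ l := Real.rpow_nonneg (by
    have := (A_bounds h0 h1).1; linarith) l
  have step1 : t ^ (p-1) * Real.log (4/t) ^ l * (f b t) ^ p ≤
      t ^ (p-1) * (2 ^ (p-1) * h ^ (p-1)) * (t ^ p * h ^ p * (1 + w) ^ (b*p))⁻¹ := by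
    apply mul_le_mul _ hinv (Real.rpow_nonneg (f_pos h0 h1).le p) (by positivity)
    exact mul_le_mul le_rfl (A_rpow_le hp hl h0 h1) hA0 (Real.rpow_nonneg h0.le _)
  have ht' : t ^ p = t ^ (p-1) * t := by
    rw [show p = (p-1)+1 by ring, Real.rpow_add h0, Real.rpow_one]
    ring_nf
  have hh' : h ^ p = h ^ (p-1) * h := by
    rw [show p = (p-1)+1 by ring, Real.rpow_add hh0, Real.rpow_one]
    ring_nf
  have hfinal : t ^ (p-1) * (2 ^ (p-1) * h ^ (p-1)) * (t ^ p * h ^ p * (1 + w) ^ (b*p))⁻¹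
      = 2 ^ (p-1) * G b p t := by
    rw [G, ht', hh']
    have htp : t ^ (p-1) ≠ 0 := (Real.rpow_pos_of_pos h0 _).ne'
    have hhp : h ^ (p-1) ≠ 0 := (Real.rpow_pos_of_pos hh0 _).ne'
    rw [← hhdef, ← hwdef]
    field_simp
  calc t ^ (p-1) * Real.log (4/t) ^ l * (f b t) ^ p
      ≤ t ^ (p-1) * (2 ^ (p-1) * h ^ (p-1)) * (t ^ p * h ^ p * (1 + w) ^ (b*p))⁻¹ := step1
    _ = 2 ^ (p-1) * G b p t := hfinal

end test
end Stmt7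


/-- The one-dimensional computation behind the counterexample: for `p > 1`, `λ ≤ p - 1`,
`1/p < β < 1`, the function `u = max (v, 0)` with
`v t = ∫_t^1 ds / (s log(e/s) (1 + (log (log (e/s)))^β))` on `(0,1]` and `v t = 0` for `t > 1`
satisfies `∫_0^1 t^{p-1} (log (4/t))^λ |u|^p dt < ∞`,
`∫_0^1 t^{p-1} (log (4/t))^λ |u'|^p dt < ∞`, yet `u t → ∞` as `t → 0⁺`. -/
theorem stmt7 (p l b : ℝ) (hp : 1 < p) (hl : l ≤ p - 1) (hb1 : 1 / p < b) (hb2 : b < 1)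
    (v u : ℝ → ℝ)
    (hv : ∀ t : ℝ, v t = if t ≤ 1 then
      ∫ s in t..1, (s * Real.log (Real.exp 1 / s) *
        (1 + (Real.log (Real.log (Real.exp 1 / s))) ^ b))⁻¹ else 0)
    (hu : ∀ t : ℝ, u t = max (v t) 0) :
    (∫⁻ t in Set.Ioc (0:ℝ) 1,
        ENNReal.ofReal (t ^ (p - 1) * (Real.log (4 / t)) ^ l * |u t| ^ p) < ⊤) ∧
    (∫⁻ t in Set.Ioc (0:ℝ) 1,
        ENNReal.ofReal (t ^ (p - 1) * (Real.log (4 / t)) ^ l * |deriv u t| ^ p) < ⊤) ∧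
    Tendsto u (nhdsWithin 0 (Set.Ioi 0)) atTop := by
  have hp0 : (0:ℝ) < p := zero_lt_one.trans hp
  have hb0 : (0:ℝ) < b := lt_trans (by positivity) hb1
  have hbp : 1 < b * p := (div_lt_iff₀ hp0).mp hb1
  have hvf : ∀ t : ℝ, t ≤ 1 → v t = ∫ s in t..1, Stmt7.f b s := by
    intro t ht
    rw [hv t, if_pos ht]
    rfl
  have hvnn : ∀ t : ℝ, 0 < t → t ≤ 1 → 0 ≤ v t := by
    intro t h0 h1
    rw [hvf t h1]
    apply intervalIntegral.integral_nonneg h1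
    intro x hx
    exact (Stmt7.f_pos (h0.trans_le hx.1) hx.2).le
  have huv : ∀ t : ℝ, 0 < t → t ≤ 1 → u t = v t := by
    intro t h0 h1
    rw [hu t]
    exact max_eq_left (hvnn t h0 h1)
  have hunn : ∀ t : ℝ, 0 ≤ u t := fun t => by rw [hu t]; exact le_max_right _ _
  have hule : ∀ t : ℝ, 0 < t → t ≤ 1 → u t ≤ 1 - Real.log t := by
    intro t h0 h1
    rw [huv t h0 h1, hvf t h1]
    have := Stmt7.v_le_neg_log hb0 h0 h1
    linarith [this]
  refine ⟨?_, ?_, ?_⟩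
  · -- first integral
    set C := (2:ℝ) ^ (p-1) * (1 + ((p-1) / (2*(2*p-1)))⁻¹) ^ (2*p-1) with hC
    calc ∫⁻ t in Set.Ioc (0:ℝ) 1,
          ENNReal.ofReal (t ^ (p - 1) * (Real.log (4 / t)) ^ l * |u t| ^ p)
        ≤ ∫⁻ _ in Set.Ioc (0:ℝ) 1, ENNReal.ofReal C := by
          apply setLIntegral_mono' measurableSet_Ioc
          intro t ht
          apply ENNReal.ofReal_le_ofReal
          rw [abs_of_nonneg (hunn t)]
          exact Stmt7.bound1 hp hl ht.1 ht.2 (hunn t) (hule t ht.1 ht.2)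
      _ = ENNReal.ofReal C * volume (Set.Ioc (0:ℝ) 1) := setLIntegral_const _ _
      _ < ⊤ := by
          rw [Real.volume_Ioc]
          exact ENNReal.mul_lt_top ENNReal.ofReal_lt_top ENNReal.ofReal_lt_top
  · -- second integral
    have hderiv : ∀ t ∈ Set.Ioo (0:ℝ) 1, deriv u t = -(Stmt7.f b t) := by
      intro t ht
      have hmem : Set.Ioo (0:ℝ) 1 ∈ 𝓝 t := isOpen_Ioo.mem_nhds ht
      have hveq : v =ᶠ[𝓝 t] fun x => ∫ s in x..1, Stmt7.f b s := by
        filter_upwards [hmem] with x hx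
        exact hvf x hx.2.le
      have huveq : u =ᶠ[𝓝 t] v := by
        filter_upwards [hmem] with x hx
        exact huv x hx.1 hx.2.le
      have hsm : StronglyMeasurableAtFilter (Stmt7.f b) (𝓝 t) volume := by
        apply ContinuousAt.stronglyMeasurableAtFilter isOpen_Ioo
          (fun x (hx : x ∈ Set.Ioo (0:ℝ) 1) => Stmt7.f_contAt hb0 hx.1 hx.2.le) t ht
      have hFTC : HasDerivAt (fun x => ∫ s in x..1, Stmt7.f b s) (-(Stmt7.f b t)) t :=
        intervalIntegral.integral_hasDerivAt_left (Stmt7.f_intble hb0 ht.1 ht.2.le)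
          hsm (Stmt7.f_contAt hb0 ht.1 ht.2.le)
      have h2 : HasDerivAt v (-(Stmt7.f b t)) t := hFTC.congr_of_eventuallyEq hveq
      exact (h2.congr_of_eventuallyEq huveq).deriv
    have hcongr : (∫⁻ t in Set.Ioc (0:ℝ) 1,
          ENNReal.ofReal (t ^ (p - 1) * (Real.log (4 / t)) ^ l * |deriv u t| ^ p))
        = ∫⁻ t in Set.Ioo (0:ℝ) 1,
          ENNReal.ofReal (t ^ (p - 1) * (Real.log (4 / t)) ^ l * |deriv u t| ^ p) :=
      (setLIntegral_congr Ioo_ae_eq_Ioc).symm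
    rw [hcongr]
    calc ∫⁻ t in Set.Ioo (0:ℝ) 1,
          ENNReal.ofReal (t ^ (p - 1) * (Real.log (4 / t)) ^ l * |deriv u t| ^ p)
        ≤ ∫⁻ t in Set.Ioo (0:ℝ) 1, ENNReal.ofReal (2 ^ (p-1) * Stmt7.G b p t) := by
          apply setLIntegral_mono' measurableSet_Ioo
          intro t ht
          apply ENNReal.ofReal_le_ofReal
          rw [hderiv t ht, abs_neg, abs_of_pos (Stmt7.f_pos ht.1 ht.2.le)]
          exact Stmt7.bound2 hp hl hb0 hb2.le ht.1 ht.2.le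
      _ ≤ ∫⁻ t in Set.Ioc (0:ℝ) 1, ENNReal.ofReal (2 ^ (p-1) * Stmt7.G b p t) :=
          lintegral_mono_set Set.Ioo_subset_Ioc_self
      _ < ⊤ := ((Stmt7.G_integrable hbp).const_mul ((2:ℝ) ^ (p-1))).lintegral_lt_top
  · -- divergence
    have hm := Stmt7.m_tendsto
    have hlog : Tendsto (fun t : ℝ => (1/2) * Real.log (1 + Real.log (1 - Real.log t)))
        (𝓝[>] (0:ℝ)) atTop := by
      apply Tendsto.const_mul_atTop (by norm_num : (0:ℝ) < 1/2)
      have := Real.tendsto_log_atTop.comp hm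
      simpa [Function.comp_def] using this
    apply tendsto_atTop_mono' (𝓝[>] (0:ℝ)) _ hlog
    filter_upwards [Ioo_mem_nhdsGT_of_mem (Set.left_mem_Ico.mpr zero_lt_one)] with t ht
    have h0 := ht.1
    have h1 := ht.2.le
    have hle := Stmt7.le_v hb0 hb2.le h0 h1
    rw [← hvf t h1] at hle
    rw [huv t h0 h1]
    calc (1/2) * Real.log (1 + Real.log (1 - Real.log t))
        = (1/2) * Real.log (1 + Real.log (Real.log (Real.exp 1 / t))) := by
          rw [Stmt7.L_eq h0]
      _ ≤ v t := hle
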